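/- Let l⁰ be a positive integer and let w⁰ > w^∞ ≥ 1 be relatively prime positive integers. Then the quartic polynomial h(x) = x⁴ − 8l⁰(w⁰ + w^∞)·x³ + 2(l⁰)²(2(w⁰)² + 41w⁰w^∞ + 2(w^∞)²)·x² − 100(l⁰)³w⁰w^∞(w⁰ + w^∞)·x + (l⁰)⁴w⁰w^∞(32(w⁰)² + 61w⁰w^∞ + 32(w^∞)²) has exactly two real roots. -/
import Mathlib


/-- The quartic `h(x)` from the proof of Proposition `numcscS`. -/
def H (l0 w0 winf : ℕ) (x : ℝ) : ℝ :=
  x^4 - 8*(l0:ℝ)*((w0:ℝ)+(winf:ℝ))*x^3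
    + 2*(l0:ℝ)^2*(2*(w0:ℝ)^2 + 41*(w0:ℝ)*(winf:ℝ) + 2*(winf:ℝ)^2)*x^2
    - 100*(l0:ℝ)^3*(w0:ℝ)*(winf:ℝ)*((w0:ℝ)+(winf:ℝ))*x
    + (l0:ℝ)^4*(w0:ℝ)*(winf:ℝ)*(32*(w0:ℝ)^2 + 61*(w0:ℝ)*(winf:ℝ) + 32*(winf:ℝ)^2)

/-- Discriminant of the monic quartic `x^4 - e1 x^3 + e2 x^2 - e3 x + e4`. -/
def discF (e1 e2 e3 e4 : ℝ) : ℝ :=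
  256*e4^3 - 192*e1*e3*e4^2 - 128*e2^2*e4^2 + 144*e2*e3^2*e4 - 27*e3^4
    + 144*e1^2*e2*e4^2 - 6*e1^2*e3^2*e4 - 80*e1*e2^2*e3*e4 + 18*e1*e2*e3^3
    + 16*e2^4*e4 - 4*e2^3*e3^2 - 27*e1^4*e4^2 + 18*e1^3*e2*e3*e4 - 4*e1^3*e3^3
    - 4*e1^2*e2^3*e4 + e1^2*e2^2*e3^2

lemma vand (x1 x2 x3 x4 : ℝ) :
    ((x1-x2)*(x1-x3)*(x1-x4)*(x2-x3)*(x2-x4)*(x3-x4))^2 =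
      discF (x1+x2+x3+x4)
        (x1*x2+x1*x3+x1*x4+x2*x3+x2*x4+x3*x4)
        (x1*x2*x3+x1*x2*x4+x1*x3*x4+x2*x3*x4)
        (x1*x2*x3*x4) := by
  simp only [discF]; ring

lemma quad_eq_zero {P Q R x1 x2 x3 : ℝ} (h12 : x1 ≠ x2) (h13 : x1 ≠ x3) (h23 : x2 ≠ x3)
    (e1 : P*x1^2 + Q*x1 + R = 0) (e2 : P*x2^2 + Q*x2 + R = 0)
    (e3 : P*x3^2 + Q*x3 + R = 0) : P = 0 ∧ Q = 0 ∧ R = 0 := by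
  have d12 : P*(x1+x2) + Q = 0 := by
    have h : (x1 - x2) * (P*(x1+x2)+Q) = 0 := by linear_combination e1 - e2
    rcases mul_eq_zero.mp h with h | h
    · exact absurd (sub_eq_zero.mp h) h12
    · exact h
  have d13 : P*(x1+x3) + Q = 0 := by
    have h : (x1 - x3) * (P*(x1+x3)+Q) = 0 := by linear_combination e1 - e3
    rcases mul_eq_zero.mp h with h | h
    · exact absurd (sub_eq_zero.mp h) h13
    · exact h
  have hP : P = 0 := by
    have h : (x2 - x3) * P = 0 := by linear_combination d12 - d13
    rcases mul_eq_zero.mp h with h | h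
    · exact absurd (sub_eq_zero.mp h) h23
    · exact h
  have hQ : Q = 0 := by linear_combination d12 - (x1+x2) * hP
  have hR : R = 0 := by linear_combination e1 - x1^2 * hP - x1 * hQ
  exact ⟨hP, hQ, hR⟩

/-- No three distinct real roots of the quartic. -/
lemma no_three (L a b x1 x2 x3 : ℝ) (hL : 1 ≤ L) (hb : 1 ≤ b) (hab : b < a)
    (h12 : x1 ≠ x2) (h13 : x1 ≠ x3) (h23 : x2 ≠ x3)
    (r1 : x1^4 - 8*L*(a+b)*x1^3 + 2*L^2*(2*a^2+41*a*b+2*b^2)*x1^2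
        - 100*L^3*a*b*(a+b)*x1 + L^4*a*b*(32*a^2+61*a*b+32*b^2) = 0)
    (r2 : x2^4 - 8*L*(a+b)*x2^3 + 2*L^2*(2*a^2+41*a*b+2*b^2)*x2^2
        - 100*L^3*a*b*(a+b)*x2 + L^4*a*b*(32*a^2+61*a*b+32*b^2) = 0)
    (r3 : x3^4 - 8*L*(a+b)*x3^3 + 2*L^2*(2*a^2+41*a*b+2*b^2)*x3^2
        - 100*L^3*a*b*(a+b)*x3 + L^4*a*b*(32*a^2+61*a*b+32*b^2) = 0) : False := by
  set x4 : ℝ := 8*L*(a+b) - x1 - x2 - x3 with hx4def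
  have hS1 : x1+x2+x3+x4 = 8*L*(a+b) := by rw [hx4def]; ring
  -- the quadratic H(x) - (x-x1)(x-x2)(x-x3)(x-x4) vanishes at x1, x2, x3
  have e1 : (2*L^2*(2*a^2+41*a*b+2*b^2) - (x1*x2+x1*x3+x1*x4+x2*x3+x2*x4+x3*x4))*x1^2
      + ((x1*x2*x3+x1*x2*x4+x1*x3*x4+x2*x3*x4) - 100*L^3*a*b*(a+b))*x1
      + (L^4*a*b*(32*a^2+61*a*b+32*b^2) - x1*x2*x3*x4) = 0 := by
    linear_combination r1 - x1^3 * hS1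
  have e2 : (2*L^2*(2*a^2+41*a*b+2*b^2) - (x1*x2+x1*x3+x1*x4+x2*x3+x2*x4+x3*x4))*x2^2
      + ((x1*x2*x3+x1*x2*x4+x1*x3*x4+x2*x3*x4) - 100*L^3*a*b*(a+b))*x2
      + (L^4*a*b*(32*a^2+61*a*b+32*b^2) - x1*x2*x3*x4) = 0 := by
    linear_combination r2 - x2^3 * hS1
  have e3 : (2*L^2*(2*a^2+41*a*b+2*b^2) - (x1*x2+x1*x3+x1*x4+x2*x3+x2*x4+x3*x4))*x3^2
      + ((x1*x2*x3+x1*x2*x4+x1*x3*x4+x2*x3*x4) - 100*L^3*a*b*(a+b))*x3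
      + (L^4*a*b*(32*a^2+61*a*b+32*b^2) - x1*x2*x3*x4) = 0 := by
    linear_combination r3 - x3^3 * hS1
  obtain ⟨hP, hQ, hR⟩ := quad_eq_zero h12 h13 h23 e1 e2 e3
  have hS2 : x1*x2+x1*x3+x1*x4+x2*x3+x2*x4+x3*x4 = 2*L^2*(2*a^2+41*a*b+2*b^2) := by
    linarith
  have hS3 : x1*x2*x3+x1*x2*x4+x1*x3*x4+x2*x3*x4 = 100*L^3*a*b*(a+b) := by linarith
  have hS4 : x1*x2*x3*x4 = L^4*a*b*(32*a^2+61*a*b+32*b^2) := by linarith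
  have hv := vand x1 x2 x3 x4
  rw [hS1, hS2, hS3, hS4] at hv
  have hnn : 0 ≤ discF (8*L*(a+b)) (2*L^2*(2*a^2+41*a*b+2*b^2)) (100*L^3*a*b*(a+b))
      (L^4*a*b*(32*a^2+61*a*b+32*b^2)) := hv ▸ sq_nonneg _
  have hfac : discF (8*L*(a+b)) (2*L^2*(2*a^2+41*a*b+2*b^2)) (100*L^3*a*b*(a+b))
      (L^4*a*b*(32*a^2+61*a*b+32*b^2))
      = -(768*L^12*a*b*(a-b)^4*(512*a^6+12480*a^5*b+102936*a^4*b^2+299585*a^3*b^3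
          +102936*a^2*b^4+12480*a*b^5+512*b^6)) := by
    simp only [discF]; ring
  have hb0 : (0:ℝ) < b := lt_of_lt_of_le one_pos hb
  have ha0 : (0:ℝ) < a := lt_trans hb0 hab
  have hL0 : (0:ℝ) < L := lt_of_lt_of_le one_pos hL
  have hd : (0:ℝ) < a - b := sub_pos.mpr hab
  have hpos : 0 < 768*L^12*a*b*(a-b)^4*(512*a^6+12480*a^5*b+102936*a^4*b^2
      +299585*a^3*b^3+102936*a^2*b^4+12480*a*b^5+512*b^6) := by positivity
  rw [hfac] at hnn
  linarith

/-- The quartic `h` has exactly two real roots. -/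
theorem stmt_6 (l0 w0 winf : ℕ) (hl0 : 0 < l0)
    (hwinf : 1 ≤ winf) (hw : winf < w0) (hcop : Nat.Coprime w0 winf) :
    {x : ℝ | H l0 w0 winf x = 0}.encard = 2 := by
  set L : ℝ := (l0:ℝ) with hLdef
  set a : ℝ := (w0:ℝ) with hadef
  set b : ℝ := (winf:ℝ) with hbdef
  have hL : 1 ≤ L := by rw [hLdef]; exact_mod_cast hl0
  have hb : 1 ≤ b := by rw [hbdef]; exact_mod_cast hwinf
  have hab : b < a := by rw [hadef, hbdef]; exact_mod_cast hw
  have hb0 : (0:ℝ) < b := lt_of_lt_of_le one_pos hb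
  have ha0 : (0:ℝ) < a := lt_trans hb0 hab
  have hL0 : (0:ℝ) < L := lt_of_lt_of_le one_pos hL
  have hd : (0:ℝ) < a - b := sub_pos.mpr hab
  have hcont : Continuous (H l0 w0 winf) := by
    unfold H; fun_prop
  -- value at 0 is positive
  have h0val : H l0 w0 winf 0 = L^4*a*b*(32*a^2+61*a*b+32*b^2) := by
    simp only [H, hLdef, hadef, hbdef]; ring
  have h0pos : 0 < H l0 w0 winf 0 := by rw [h0val]; positivity
  -- value at m := 2*L*a is negative
  have hmval : H l0 w0 winf (2*L*a) = -(L^4*a*(27*b^3+27*b^2*(a-b)+32*(a-b)^3)) := by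
    simp only [H, hLdef, hadef, hbdef]; ring
  have hmneg : H l0 w0 winf (2*L*a) < 0 := by
    rw [hmval]
    have : 0 < L^4*a*(27*b^3+27*b^2*(a-b)+32*(a-b)^3) := by positivity
    linarith
  -- value at X := 8*L*(a+b) is positive
  have hXval : H l0 w0 winf (8*L*(a+b))
      = L^4*((a+b)^2*(256*a^2+4448*a*b+256*b^2)+a*b*(32*a^2+61*a*b+32*b^2)) := by
    simp only [H, hLdef, hadef, hbdef]; ring
  have hXpos : 0 < H l0 w0 winf (8*L*(a+b)) := by rw [hXval]; positivity
  have h0m : (0:ℝ) ≤ 2*L*a := by positivity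
  have hmX : 2*L*a ≤ 8*L*(a+b) := by nlinarith
  -- IVT on [0, m]
  obtain ⟨u, humem, hu⟩ := intermediate_value_Icc' h0m hcont.continuousOn
    (Set.mem_Icc.mpr ⟨le_of_lt hmneg, le_of_lt h0pos⟩)
  -- IVT on [m, X]
  obtain ⟨v, hvmem, hv⟩ := intermediate_value_Icc hmX hcont.continuousOn
    (Set.mem_Icc.mpr ⟨le_of_lt hmneg, le_of_lt hXpos⟩)
  have huv : u ≠ v := by
    intro h
    have h1 : u = 2*L*a := le_antisymm humem.2 (h ▸ hvmem.1)
    rw [h1] at hu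
    rw [hu] at hmneg
    exact lt_irrefl 0 hmneg
  have hset : {x : ℝ | H l0 w0 winf x = 0} = {u, v} := by
    ext x
    simp only [Set.mem_setOf_eq, Set.mem_insert_iff, Set.mem_singleton_iff]
    constructor
    · intro hx
      by_cases hxu : x = u
      · exact Or.inl hxu
      by_cases hxv : x = v
      · exact Or.inr hxv
      exfalso
      have hx' := hx
      simp only [H, hLdef, hadef, hbdef] at hx' hu hv
      exact no_three L a b x u v hL hb hab hxu hxv huv
        (by linear_combination hx') (by linear_combination hu) (by linear_combination hv)
    · rintro (rfl | rfl)
      · exact hu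
      · exact hv
  rw [hset]
  exact Set.encard_pair huv
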